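/- arXiv:2210.04098 — 5 statements merged into one kernel-verified Lean document; each statement's English description precedes it below -/
import Mathlib

section
/- Let k be a natural number. Then the difference between the k-step discounted cost started from μ and the stationary discounted cost is bounded as: |Σ_{t=0}^{k−1} γ^t Σ_{x∈S} c(x)·(μP^t)(x) − ((1−γ^k)/(1−γ))·Σ_{x∈S} c(x)·Δ(x)| ≤ 2·(max_{x∈S}|c(x)|)·B·(1−(γβ)^k)/(1−γβ). -/
open Finset

theorem stmt_0 {S : Type*} [Fintype S] [DecidableEq S] [Nonempty S]
    (P : Matrix S S ℝ)
    (hP0 : ∀ x x', 0 ≤ P x x') (hP1 : ∀ x, ∑ x', P x x' = 1)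
    (μ Δ : S → ℝ)
    (hμ0 : ∀ x, 0 ≤ μ x) (hμ1 : ∑ x, μ x = 1)
    (hΔ0 : ∀ x, 0 ≤ Δ x) (hΔ1 : ∑ x, Δ x = 1)
    (hstat : ∀ x', ∑ x, Δ x * P x x' = Δ x')
    (c : S → ℝ) (γ : ℝ) (hγ : γ ∈ Set.Ioo (0 : ℝ) 1)
    (B β : ℝ) (hB : 0 < B) (hβ : β ∈ Set.Ioo (0 : ℝ) 1)
    (hmix : ∀ t : ℕ, ∑ x, |(∑ y, μ y * (P ^ t) y x) - Δ x| ≤ 2 * B * β ^ t)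
    (k : ℕ) :
    |(∑ t ∈ Finset.range k, γ ^ t * ∑ x, c x * (∑ y, μ y * (P ^ t) y x))
        - ((1 - γ ^ k) / (1 - γ)) * ∑ x, c x * Δ x|
      ≤ 2 * (Finset.univ.sup' Finset.univ_nonempty fun x => |c x|) * B
          * (1 - (γ * β) ^ k) / (1 - γ * β) := by
  obtain ⟨hγ0, hγ1⟩ := hγ
  obtain ⟨hβ0, hβ1⟩ := hβ
  set M := Finset.univ.sup' Finset.univ_nonempty fun x => |c x| with hM
  have hMle : ∀ x, |c x| ≤ M := fun x =>
    Finset.le_sup' (fun x => |c x|) (Finset.mem_univ x)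
  have hM0 : 0 ≤ M := le_trans (abs_nonneg _) (hMle (Classical.arbitrary S))
  have hgeo : ∑ t ∈ Finset.range k, γ ^ t = (1 - γ ^ k) / (1 - γ) := by
    rw [geom_sum_eq (ne_of_lt hγ1), div_eq_div_iff (by linarith) (by linarith)]
    ring
  have hγβ1 : γ * β < 1 := by nlinarith
  have hgeo2 : ∑ t ∈ Finset.range k, (γ * β) ^ t = (1 - (γ * β) ^ k) / (1 - γ * β) := by
    rw [geom_sum_eq (ne_of_lt hγβ1), div_eq_div_iff (by linarith) (by linarith)]
    ring
  have key : (∑ t ∈ Finset.range k, γ ^ t * ∑ x, c x * (∑ y, μ y * (P ^ t) y x))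
        - ((1 - γ ^ k) / (1 - γ)) * ∑ x, c x * Δ x
      = ∑ t ∈ Finset.range k, γ ^ t * ∑ x, c x * ((∑ y, μ y * (P ^ t) y x) - Δ x) := by
    rw [← hgeo, Finset.sum_mul, ← Finset.sum_sub_distrib]
    refine Finset.sum_congr rfl fun t _ => ?_
    rw [← mul_sub, ← Finset.sum_sub_distrib]
    congr 1
    refine Finset.sum_congr rfl fun x _ => ?_
    ring
  rw [key]
  calc |∑ t ∈ Finset.range k, γ ^ t * ∑ x, c x * ((∑ y, μ y * (P ^ t) y x) - Δ x)|
      ≤ ∑ t ∈ Finset.range k, |γ ^ t * ∑ x, c x * ((∑ y, μ y * (P ^ t) y x) - Δ x)| :=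
        Finset.abs_sum_le_sum_abs _ _
    _ ≤ ∑ t ∈ Finset.range k, 2 * M * B * (γ * β) ^ t := by
        refine Finset.sum_le_sum fun t _ => ?_
        rw [abs_mul, abs_pow, abs_of_pos hγ0]
        have h1 : |∑ x, c x * ((∑ y, μ y * (P ^ t) y x) - Δ x)| ≤ M * (2 * B * β ^ t) := by
          calc |∑ x, c x * ((∑ y, μ y * (P ^ t) y x) - Δ x)|
              ≤ ∑ x, |c x * ((∑ y, μ y * (P ^ t) y x) - Δ x)| :=
                Finset.abs_sum_le_sum_abs _ _
            _ ≤ ∑ x, M * |(∑ y, μ y * (P ^ t) y x) - Δ x| := by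
                refine Finset.sum_le_sum fun x _ => ?_
                rw [abs_mul]
                exact mul_le_mul_of_nonneg_right (hMle x) (abs_nonneg _)
            _ = M * ∑ x, |(∑ y, μ y * (P ^ t) y x) - Δ x| := by rw [Finset.mul_sum]
            _ ≤ M * (2 * B * β ^ t) := mul_le_mul_of_nonneg_left (hmix t) hM0
        calc γ ^ t * |∑ x, c x * ((∑ y, μ y * (P ^ t) y x) - Δ x)|
            ≤ γ ^ t * (M * (2 * B * β ^ t)) :=
              mul_le_mul_of_nonneg_left h1 (pow_nonneg hγ0.le t)
          _ = 2 * M * B * (γ * β) ^ t := by rw [mul_pow]; ring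
    _ = 2 * M * B * ((1 - (γ * β) ^ k) / (1 - γ * β)) := by
        rw [← Finset.mul_sum, hgeo2]
    _ = 2 * M * B * (1 - (γ * β) ^ k) / (1 - γ * β) := by ring
end

section
/- The infinite-horizon discounted cost series Σ_{t=0}^{∞} γ^t Σ_{x∈S} c(x)·(μP^t)(x) converges, and |Σ_{t=0}^{∞} γ^t Σ_{x∈S} c(x)·(μP^t)(x) − (1/(1−γ))·Σ_{x∈S} c(x)·Δ(x)| ≤ 2·(max_{x∈S}|c(x)|)·B/(1−γβ). -/
open Finset

theorem hasSum_discounted_of_abs_sub_le_geometric {a : ℕ → ℝ} {L K γ β : ℝ}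
    (hγ0 : 0 ≤ γ) (hγ1 : γ < 1) (hβ0 : 0 ≤ β) (hγβ : γ * β < 1)
    (ha : ∀ t, |a t - L| ≤ K * β ^ t) :
    ∃ J, HasSum (fun t => γ ^ t * a t) J ∧ |J - L / (1 - γ)| ≤ K / (1 - γ * β) := by
  set g : ℕ → ℝ := fun t => γ ^ t * (a t - L)
  have hg : ∀ t, ‖g t‖ ≤ K * (γ * β) ^ t := fun t => by
    calc ‖g t‖ = γ ^ t * |a t - L| := by
          rw [Real.norm_eq_abs, abs_mul, abs_of_nonneg (pow_nonneg hγ0 t)]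
      _ ≤ γ ^ t * (K * β ^ t) := mul_le_mul_of_nonneg_left (ha t) (pow_nonneg hγ0 t)
      _ = K * (γ * β) ^ t := by ring
  have hgeo : HasSum (fun t => K * (γ * β) ^ t) (K * (1 - γ * β)⁻¹) :=
    (hasSum_geometric_of_lt_one (mul_nonneg hγ0 hβ0) hγβ).mul_left K
  have hconst : HasSum (fun t => γ ^ t * L) (L / (1 - γ)) := by
    simpa only [div_eq_inv_mul] using (hasSum_geometric_of_lt_one hγ0 hγ1).mul_right L
  refine ⟨L / (1 - γ) + ∑' t, g t, ?_, ?_⟩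
  · convert hconst.add (Summable.of_norm_bounded hgeo.summable hg).hasSum using 1
    ext t
    ring
  · rw [add_sub_cancel_left, ← Real.norm_eq_abs, div_eq_mul_inv]
    exact tsum_of_norm_bounded hgeo hg

theorem abs_sum_mul_sub_sum_mul_le {ι : Type*} {s : Finset ι} (hs : s.Nonempty)
    (c p q : ι → ℝ) :
    |∑ x ∈ s, c x * p x - ∑ x ∈ s, c x * q x|
      ≤ (s.sup' hs fun x => |c x|) * ∑ x ∈ s, |p x - q x| := by
  rw [← sum_sub_distrib, mul_sum]
  refine (abs_sum_le_sum_abs _ _).trans (sum_le_sum fun x hx => ?_)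
  rw [← mul_sub, abs_mul]
  exact mul_le_mul_of_nonneg_right (le_sup' (fun x => |c x|) hx) (abs_nonneg _)

theorem stmt_1_general {S : Type*} [Fintype S] [DecidableEq S] [Nonempty S]
    (P : Matrix S S ℝ)
    (μ Δ : S → ℝ)
    (c : S → ℝ) (γ : ℝ) (hγ : γ ∈ Set.Ioo (0 : ℝ) 1)
    (B β : ℝ) (hβ : β ∈ Set.Ioo (0 : ℝ) 1)
    (hmix : ∀ t : ℕ, ∑ x, |(∑ y, μ y * (P ^ t) y x) - Δ x| ≤ 2 * B * β ^ t) :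
    ∃ J : ℝ,
      HasSum (fun t : ℕ => γ ^ t * ∑ x, c x * (∑ y, μ y * (P ^ t) y x)) J ∧
      |J - (1 / (1 - γ)) * ∑ x, c x * Δ x|
        ≤ 2 * (Finset.univ.sup' Finset.univ_nonempty fun x => |c x|) * B / (1 - γ * β) := by
  obtain ⟨hγ0, hγ1⟩ := hγ
  obtain ⟨hβ0, hβ1⟩ := hβ
  set M := Finset.univ.sup' Finset.univ_nonempty fun x => |c x|
  have hM : 0 ≤ M :=
    (abs_nonneg _).trans (le_sup' (fun x => |c x|) (mem_univ (Classical.arbitrary S)))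
  have hcost : ∀ t : ℕ, |∑ x, c x * (∑ y, μ y * (P ^ t) y x) - ∑ x, c x * Δ x|
      ≤ 2 * M * B * β ^ t := fun t => by
    calc _ ≤ M * ∑ x, |(∑ y, μ y * (P ^ t) y x) - Δ x| := abs_sum_mul_sub_sum_mul_le _ _ _ _
      _ ≤ M * (2 * B * β ^ t) := mul_le_mul_of_nonneg_left (hmix t) hM
      _ = 2 * M * B * β ^ t := by ring
  have hγβ : γ * β < 1 := by nlinarith
  simpa only [one_div_mul_eq_div] using
    hasSum_discounted_of_abs_sub_le_geometric hγ0.le hγ1 hβ0.le hγβ hcost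

theorem stmt_1 {S : Type*} [Fintype S] [DecidableEq S] [Nonempty S]
    (P : Matrix S S ℝ)
    (hP0 : ∀ x x', 0 ≤ P x x') (hP1 : ∀ x, ∑ x', P x x' = 1)
    (μ Δ : S → ℝ)
    (hμ0 : ∀ x, 0 ≤ μ x) (hμ1 : ∑ x, μ x = 1)
    (hΔ0 : ∀ x, 0 ≤ Δ x) (hΔ1 : ∑ x, Δ x = 1)
    (hstat : ∀ x', ∑ x, Δ x * P x x' = Δ x')
    (c : S → ℝ) (γ : ℝ) (hγ : γ ∈ Set.Ioo (0 : ℝ) 1)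
    (B β : ℝ) (hB : 0 < B) (hβ : β ∈ Set.Ioo (0 : ℝ) 1)
    (hmix : ∀ t : ℕ, ∑ x, |(∑ y, μ y * (P ^ t) y x) - Δ x| ≤ 2 * B * β ^ t) :
    ∃ J : ℝ,
      HasSum (fun t : ℕ => γ ^ t * ∑ x, c x * (∑ y, μ y * (P ^ t) y x)) J ∧
      |J - (1 / (1 - γ)) * ∑ x, c x * Δ x|
        ≤ 2 * (Finset.univ.sup' Finset.univ_nonempty fun x => |c x|) * B / (1 - γ * β) :=
  stmt_1_general P μ Δ c γ hγ B β hβ hmix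
end

section
/- For every natural number k and every x ∈ S, the k-th Bellman iterate of ψ is nonnegative and concave in the belief variable: the map p ↦ (B^k ψ)(p,x) is concave on [0,1] and satisfies (B^k ψ)(p,x) ≥ 0 for all p ∈ [0,1]. -/
open Finset Filter Topology

noncomputable section

/-- `p̄ = p + ρ(1-p)`, the predicted change probability. -/
def pbar (ρ p : ℝ) : ℝ := p + ρ * (1 - p)

/-- Likelihood ratio `L(x',x) = Q₂(x'|x) / Q₁(x'|x)`. -/
def likeRatio {S : Type*} (Q1 Q2 : S → S → ℝ) (x' x : S) : ℝ := Q2 x x' / Q1 x x'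

/-- Bayesian posterior update `Φ(x',x,p)`. -/
def post {S : Type*} (Q1 Q2 : S → S → ℝ) (ρ : ℝ) (x' x : S) (p : ℝ) : ℝ :=
  pbar ρ p * likeRatio Q1 Q2 x' x / (pbar ρ p * likeRatio Q1 Q2 x' x + (1 - pbar ρ p))

/-- Predictive probability `P(x'|p,x)`. -/
def pred {S : Type*} (Q1 Q2 : S → S → ℝ) (ρ : ℝ) (x' : S) (p : ℝ) (x : S) : ℝ :=
  (1 - pbar ρ p) * Q1 x x' + pbar ρ p * Q2 x x'

/-- The Bellman operator `B`. -/
def bell {S : Type*} [Fintype S] (Q1 Q2 : S → S → ℝ) (ρ lam : ℝ)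
    (V : ℝ → S → ℝ) : ℝ → S → ℝ :=
  fun p x => min (lam * (1 - p))
    (p + ∑ x' : S, pred Q1 Q2 ρ x' p x * V (post Q1 Q2 ρ x' x p) x')

/-- The stopping cost `ψ(p,x) = λ(1-p)`. -/
def psi (S : Type*) (lam : ℝ) : ℝ → S → ℝ := fun p _ => lam * (1 - p)

/-!
All the functions of `p` met in one Bellman step are affine in `p`: the stopping cost,
the predictive probability `P(x'|p,x)` and the unnormalised posterior `p̄ Q₂(x,x')`, and
`Φ(x',x,p)` is their quotient. Hence each term `P(x'|p,x) V(Φ(x',x,p), x')` is the perspective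
`A(p) V(N(p)/A(p))` of a concave function along affine maps `A > 0`, `N`, which is concave.
Sums and minima of concave functions are concave, so `B` preserves concavity on `[0,1]`;
nonnegativity is preserved because `Φ` maps `[0,1]` into itself.
-/

theorem AffineMap.concaveOn {E : Type*} [AddCommGroup E] [Module ℝ E] {s : Set E}
    (f : E →ᵃ[ℝ] ℝ) (hs : Convex ℝ s) : ConcaveOn ℝ s f :=
  ⟨hs, fun _ _ _ _ _ _ _ _ hab => (Convex.combo_affine_apply hab).ge⟩

theorem ConcaveOn.finset_sum {ι E : Type*} [AddCommGroup E] [Module ℝ E] {s : Set E}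
    (hs : Convex ℝ s) (t : Finset ι) {f : ι → E → ℝ} (hf : ∀ i ∈ t, ConcaveOn ℝ s (f i)) :
    ConcaveOn ℝ s (fun z => ∑ i ∈ t, f i z) := by
  induction t using Finset.cons_induction with
  | empty => simpa using concaveOn_const (0 : ℝ) hs
  | cons i t _ ih =>
    simp only [Finset.sum_cons]
    exact (hf i (Finset.mem_cons_self i t)).add
      (ih fun j hj => hf j (Finset.mem_cons_of_mem hj))

theorem ConcaveOn.perspective {E : Type*} [AddCommGroup E] [Module ℝ E] {s : Set E}
    {t : Set ℝ} {V : ℝ → ℝ} (hV : ConcaveOn ℝ t V) (hs : Convex ℝ s) (A N : E →ᵃ[ℝ] ℝ)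
    (hA : ∀ z ∈ s, 0 < A z) (hNA : ∀ z ∈ s, N z / A z ∈ t) :
    ConcaveOn ℝ s (fun z => A z * V (N z / A z)) := by
  refine ⟨hs, fun z hz w hw a b ha hb hab => ?_⟩
  set r := a • z + b • w
  have hr : r ∈ s := hs hz hw ha hb hab
  have hAz := hA z hz
  have hAw := hA w hw
  have hAr := hA r hr
  have hA_r : A r = a * A z + b * A w := Convex.combo_affine_apply hab
  have hN_r : N r = a * N z + b * N w := Convex.combo_affine_apply hab
  -- Jensen for `V` with the weights `a A z / A r` and `b A w / A r`.
  have hweights : a * A z / A r + b * A w / A r = 1 := by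
    rw [← add_div, ← hA_r, div_self hAr.ne']
  have hcombo : N r / A r = (a * A z / A r) * (N z / A z) + (b * A w / A r) * (N w / A w) := by
    rw [hN_r]
    field_simp
  have hjensen := hV.2 (hNA z hz) (hNA w hw)
    (div_nonneg (mul_nonneg ha hAz.le) hAr.le) (div_nonneg (mul_nonneg hb hAw.le) hAr.le)
    hweights
  simp only [smul_eq_mul, ← hcombo] at hjensen ⊢
  calc a * (A z * V (N z / A z)) + b * (A w * V (N w / A w))
      = A r * (a * A z / A r * V (N z / A z) + b * A w / A r * V (N w / A w)) := by
        field_simp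
    _ ≤ A r * V (N r / A r) := mul_le_mul_of_nonneg_left hjensen hAr.le

section BeliefUpdate

variable {S : Type*} {Q1 Q2 : S → S → ℝ} {ρ : ℝ}

theorem pbar_eq_lineMap (ρ p : ℝ) : pbar ρ p = AffineMap.lineMap ρ 1 p := by
  rw [AffineMap.lineMap_apply_ring', pbar]
  ring

theorem pbar_mem_Icc (hρ : ρ ∈ Set.Icc (0 : ℝ) 1) {p : ℝ} (hp : p ∈ Set.Icc (0 : ℝ) 1) :
    pbar ρ p ∈ Set.Icc (0 : ℝ) 1 := by
  obtain ⟨hρ0, hρ1⟩ := hρ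
  obtain ⟨hp0, hp1⟩ := hp
  constructor <;> unfold pbar <;> nlinarith

theorem pred_eq_lineMap (x' : S) (p : ℝ) (x : S) :
    pred Q1 Q2 ρ x' p x = AffineMap.lineMap (Q1 x x') (Q2 x x') (pbar ρ p) := by
  rw [AffineMap.lineMap_apply_module, pred, smul_eq_mul, smul_eq_mul]

theorem pbar_mul_le_pred (hρ : ρ ∈ Set.Icc (0 : ℝ) 1) {x x' : S} (hQ1 : 0 ≤ Q1 x x')
    {p : ℝ} (hp : p ∈ Set.Icc (0 : ℝ) 1) : pbar ρ p * Q2 x x' ≤ pred Q1 Q2 ρ x' p x := by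
  have := mul_nonneg (sub_nonneg.2 (pbar_mem_Icc hρ hp).2) hQ1
  rw [pred]
  linarith

theorem pred_pos (hρ : ρ ∈ Set.Icc (0 : ℝ) 1) {x x' : S} (hQ1 : 0 < Q1 x x')
    (hQ2 : 0 < Q2 x x') {p : ℝ} (hp : p ∈ Set.Icc (0 : ℝ) 1) : 0 < pred Q1 Q2 ρ x' p x := by
  rw [pred_eq_lineMap, AffineMap.lineMap_apply_module]
  obtain ⟨h0, h1⟩ := pbar_mem_Icc hρ hp
  exact convex_Ioi (0 : ℝ) hQ1 hQ2 (sub_nonneg.2 h1) h0 (sub_add_cancel 1 _)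

theorem post_eq_div {x x' : S} (hQ1 : Q1 x x' ≠ 0) (p : ℝ) :
    post Q1 Q2 ρ x' x p = pbar ρ p * Q2 x x' / pred Q1 Q2 ρ x' p x := by
  have hden : pbar ρ p * likeRatio Q1 Q2 x' x + (1 - pbar ρ p) =
      pred Q1 Q2 ρ x' p x / Q1 x x' := by
    rw [likeRatio, pred]
    field_simp
    ring
  rw [post, hden, likeRatio, ← mul_div_assoc, div_div_div_cancel_right₀ hQ1]

theorem post_mem_Icc (hρ : ρ ∈ Set.Icc (0 : ℝ) 1) {x x' : S} (hQ1 : 0 < Q1 x x')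
    (hQ2 : 0 < Q2 x x') {p : ℝ} (hp : p ∈ Set.Icc (0 : ℝ) 1) :
    post Q1 Q2 ρ x' x p ∈ Set.Icc (0 : ℝ) 1 := by
  have hpred := pred_pos hρ hQ1 hQ2 hp
  rw [post_eq_div hQ1.ne']
  exact ⟨div_nonneg (mul_nonneg (pbar_mem_Icc hρ hp).1 hQ2.le) hpred.le,
    (div_le_one hpred).2 (pbar_mul_le_pred hρ hQ1.le hp)⟩

theorem concaveOn_pred_mul_comp_post (hρ : ρ ∈ Set.Icc (0 : ℝ) 1) {x x' : S}
    (hQ1 : 0 < Q1 x x') (hQ2 : 0 < Q2 x x') {V : ℝ → ℝ}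
    (hV : ConcaveOn ℝ (Set.Icc (0 : ℝ) 1) V) :
    ConcaveOn ℝ (Set.Icc (0 : ℝ) 1)
      (fun p => pred Q1 Q2 ρ x' p x * V (post Q1 Q2 ρ x' x p)) := by
  let A := (AffineMap.lineMap (Q1 x x') (Q2 x x')).comp (AffineMap.lineMap ρ (1 : ℝ))
  let N := (AffineMap.lineMap 0 (Q2 x x')).comp (AffineMap.lineMap ρ (1 : ℝ))
  have hA : ∀ p, A p = pred Q1 Q2 ρ x' p x := fun p => by
    simp only [A, AffineMap.comp_apply, ← pbar_eq_lineMap, pred_eq_lineMap]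
  have hN : ∀ p, N p = pbar ρ p * Q2 x x' := fun p => by
    simp only [N, AffineMap.comp_apply, AffineMap.lineMap_apply_ring', pbar]
    ring
  have hpost : ∀ p, N p / A p = post Q1 Q2 ρ x' x p := fun p => by
    rw [hA, hN, post_eq_div hQ1.ne']
  refine (hV.perspective (convex_Icc 0 1) A N (fun p hp => ?_) (fun p hp => ?_)).congr
    fun p _ => by rw [← hpost, ← hA]
  · exact hA p ▸ pred_pos hρ hQ1 hQ2 hp
  · exact hpost p ▸ post_mem_Icc hρ hQ1 hQ2 hp

variable [Fintype S] {lam : ℝ} {V : ℝ → S → ℝ}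

theorem concaveOn_bell (hρ : ρ ∈ Set.Icc (0 : ℝ) 1) (hQ1 : ∀ x x', 0 < Q1 x x')
    (hQ2 : ∀ x x', 0 < Q2 x x') (hV : ∀ x', ConcaveOn ℝ (Set.Icc (0 : ℝ) 1) (V · x'))
    (x : S) : ConcaveOn ℝ (Set.Icc (0 : ℝ) 1) (bell Q1 Q2 ρ lam V · x) := by
  have hstop : ConcaveOn ℝ (Set.Icc (0 : ℝ) 1) (fun p => lam * (1 - p)) :=
    ((AffineMap.lineMap lam 0).concaveOn (convex_Icc 0 1)).congr fun p _ => by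
      simp only [AffineMap.lineMap_apply_ring']
      ring
  have hcont := (concaveOn_id (convex_Icc (0 : ℝ) 1)).add
    (ConcaveOn.finset_sum (convex_Icc 0 1) univ
      fun x' _ => concaveOn_pred_mul_comp_post hρ (hQ1 x x') (hQ2 x x') (hV x'))
  exact hstop.inf hcont

theorem bell_nonneg (hρ : ρ ∈ Set.Icc (0 : ℝ) 1) (hQ1 : ∀ x x', 0 < Q1 x x')
    (hQ2 : ∀ x x', 0 < Q2 x x') (hlam : 0 ≤ lam)
    (hV : ∀ x', ∀ p ∈ Set.Icc (0 : ℝ) 1, 0 ≤ V p x') (x : S) {p : ℝ}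
    (hp : p ∈ Set.Icc (0 : ℝ) 1) : 0 ≤ bell Q1 Q2 ρ lam V p x := by
  refine le_min (mul_nonneg hlam (sub_nonneg.2 hp.2)) (add_nonneg hp.1 ?_)
  exact sum_nonneg fun x' _ => mul_nonneg (pred_pos hρ (hQ1 x x') (hQ2 x x') hp).le
    (hV x' _ (post_mem_Icc hρ (hQ1 x x') (hQ2 x x') hp))

end BeliefUpdate

theorem stmt_5_general {S : Type*} [Fintype S]
    (Q1 Q2 : S → S → ℝ)
    (hQ1pos : ∀ x x', 0 < Q1 x x') (hQ2pos : ∀ x x', 0 < Q2 x x')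
    (ρ : ℝ) (hρ : ρ ∈ Set.Ioo (0 : ℝ) 1)
    (lam : ℝ) (hlam : 0 < lam) :
    ∀ (k : ℕ) (x : S),
      ConcaveOn ℝ (Set.Icc (0 : ℝ) 1)
        (fun p => ((bell Q1 Q2 ρ lam)^[k] (psi S lam)) p x) ∧
      ∀ p ∈ Set.Icc (0 : ℝ) 1,
        0 ≤ ((bell Q1 Q2 ρ lam)^[k] (psi S lam)) p x := by
  have hρ' := Set.Ioo_subset_Icc_self hρ
  intro k
  induction k with
  | zero =>
    refine fun x => ⟨((AffineMap.lineMap lam 0).concaveOn (convex_Icc 0 1)).congr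
      fun p _ => ?_, fun p hp => mul_nonneg hlam.le (sub_nonneg.2 hp.2)⟩
    simp only [AffineMap.lineMap_apply_ring', Function.iterate_zero, id_eq, psi]
    ring
  | succ k ih =>
    simp only [Function.iterate_succ_apply']
    exact fun x => ⟨concaveOn_bell hρ' hQ1pos hQ2pos (fun x' => (ih x').1) x,
      fun p hp => bell_nonneg hρ' hQ1pos hQ2pos hlam.le (fun x' => (ih x').2) x hp⟩

theorem stmt_5 {S : Type*} [Fintype S] [Nonempty S]
    (Q1 Q2 : S → S → ℝ)
    (hQ1pos : ∀ x x', 0 < Q1 x x') (hQ2pos : ∀ x x', 0 < Q2 x x')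
    (hQ1row : ∀ x, ∑ x', Q1 x x' = 1) (hQ2row : ∀ x, ∑ x', Q2 x x' = 1)
    (ρ : ℝ) (hρ : ρ ∈ Set.Ioo (0 : ℝ) 1)
    (lam : ℝ) (hlam : 0 < lam) :
    ∀ (k : ℕ) (x : S),
      ConcaveOn ℝ (Set.Icc (0 : ℝ) 1)
        (fun p => ((bell Q1 Q2 ρ lam)^[k] (psi S lam)) p x) ∧
      ∀ p ∈ Set.Icc (0 : ℝ) 1,
        0 ≤ ((bell Q1 Q2 ρ lam)^[k] (psi S lam)) p x :=
  stmt_5_general Q1 Q2 hQ1pos hQ2pos ρ hρ lam hlam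
end
end

section
/- The pointwise limit W(p,x) := lim_{k→∞} (B^k ψ)(p,x) of the Bellman iterates of ψ is a fixed point of B: (BW)(p,x) = W(p,x) for all p ∈ [0,1] and x ∈ S. -/
open Finset Filter Topology

noncomputable section

lemma post_mem {S : Type*} (Q1 Q2 : S → S → ℝ)
    (hQ1pos : ∀ x x', 0 < Q1 x x') (hQ2pos : ∀ x x', 0 < Q2 x x')
    (ρ : ℝ) (hρ : ρ ∈ Set.Ioo (0 : ℝ) 1) (x' x : S) (p : ℝ)
    (hp : p ∈ Set.Icc (0 : ℝ) 1) :
    post Q1 Q2 ρ x' x p ∈ Set.Icc (0 : ℝ) 1 := by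
  obtain ⟨hp0, hp1⟩ := hp
  have hpb0 : 0 < pbar ρ p := by
    unfold pbar; nlinarith [hρ.1, hρ.2]
  have hpb1 : pbar ρ p ≤ 1 := by
    unfold pbar; nlinarith [hρ.1, hρ.2]
  have hL : 0 < likeRatio Q1 Q2 x' x :=
    div_pos (hQ2pos x x') (hQ1pos x x')
  have ha : 0 < pbar ρ p * likeRatio Q1 Q2 x' x := mul_pos hpb0 hL
  have hb : 0 ≤ 1 - pbar ρ p := by linarith
  have hd : 0 < pbar ρ p * likeRatio Q1 Q2 x' x + (1 - pbar ρ p) := by linarith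
  constructor
  · exact div_nonneg ha.le hd.le
  · rw [post, div_le_one hd]; linarith

theorem stmt_10 {S : Type*} [Fintype S] [Nonempty S]
    (Q1 Q2 : S → S → ℝ)
    (hQ1pos : ∀ x x', 0 < Q1 x x') (hQ2pos : ∀ x x', 0 < Q2 x x')
    (hQ1row : ∀ x, ∑ x', Q1 x x' = 1) (hQ2row : ∀ x, ∑ x', Q2 x x' = 1)
    (ρ : ℝ) (hρ : ρ ∈ Set.Ioo (0 : ℝ) 1)
    (lam : ℝ) (hlam : 0 < lam)
    (W : ℝ → S → ℝ)
    (hW : ∀ p ∈ Set.Icc (0 : ℝ) 1, ∀ x : S,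
        Filter.Tendsto (fun k : ℕ => ((bell Q1 Q2 ρ lam)^[k] (psi S lam)) p x)
          Filter.atTop (nhds (W p x))) :
    ∀ p ∈ Set.Icc (0 : ℝ) 1, ∀ x : S, bell Q1 Q2 ρ lam W p x = W p x := by
  intro p hp x
  -- the shifted sequence also tends to W p x
  have h1 : Tendsto (fun k : ℕ => ((bell Q1 Q2 ρ lam)^[k + 1] (psi S lam)) p x)
      atTop (nhds (W p x)) :=
    (hW p hp x).comp (tendsto_add_atTop_nat 1)
  -- rewrite using iterate_succ'
  have h2 : (fun k : ℕ => ((bell Q1 Q2 ρ lam)^[k + 1] (psi S lam)) p x)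
      = fun k : ℕ => bell Q1 Q2 ρ lam ((bell Q1 Q2 ρ lam)^[k] (psi S lam)) p x := by
    funext k
    rw [Function.iterate_succ_apply']
  rw [h2] at h1
  -- the same sequence tends to bell W p x
  have h3 : Tendsto (fun k : ℕ => bell Q1 Q2 ρ lam ((bell Q1 Q2 ρ lam)^[k] (psi S lam)) p x)
      atTop (nhds (bell Q1 Q2 ρ lam W p x)) := by
    unfold bell
    apply Tendsto.min tendsto_const_nhds
    apply Tendsto.add tendsto_const_nhds
    apply tendsto_finset_sum
    intro x' _
    exact Tendsto.const_mul _
      (hW (post Q1 Q2 ρ x' x p) (post_mem Q1 Q2 hQ1pos hQ2pos ρ hρ x' x p hp) x')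
  exact tendsto_nhds_unique h3 h1
end
end

section
/- Single-crossing threshold lemma: let λ > 0, let 0 ≤ c < λ, and let f : [0,1] → ℝ be concave with 0 ≤ f(p) ≤ c·(1−p) for all p ∈ [0,1]. Then there exists a unique p° ∈ (0,1) such that λ(1−p°) = p° + f(p°); moreover, for every p ∈ [0,1], λ(1−p) ≤ p + f(p) if and only if p ≥ p°. In particular, min(λ(1−p), p + f(p)) = λ(1−p) exactly when p ≥ p°. -/
/-!
Put `g p = p + f p - λ (1 - p)`. It is concave on `[0, 1]`, `g 1 = 1 > 0` because `0 ≤ f 1 ≤ 0`,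
and the bounds on `f` squeeze `g` between the lines `p - λ (1 - p)` and `p - (λ - c) (1 - p)`,
whose zeros `(λ - c) / (1 + λ - c) ≤ λ / (1 + λ)` lie in `(0, 1)`. A concave function is continuous
on the open interval (it may jump at the endpoints, so `g 0 < 0` alone does not suffice), hence `g`
vanishes between these two points. Once `g p₀ = 0 < g 1`, concavity along
the segments through `p₀` and `1` forces `g < 0` before `p₀` and `g > 0` after it.
-/

open Set

section Concave

variable {𝕜 : Type*} [Field 𝕜] [LinearOrder 𝕜] [IsStrictOrderedRing 𝕜]

theorem ConcaveOn.pos_of_mem_openSegment {E : Type*} [AddCommGroup E] [Module 𝕜 E] {s : Set E}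
    {g : E → 𝕜} (hg : ConcaveOn 𝕜 s g) {x y z : E} (hx : x ∈ s) (hz : z ∈ s) (hgx : 0 ≤ g x)
    (hgz : 0 < g z) (hy : y ∈ openSegment 𝕜 x z) : 0 < g y := by
  obtain ⟨a, b, ha, hb, hab, rfl⟩ := hy
  calc 0 < a • g x + b • g z := add_pos_of_nonneg_of_pos (smul_nonneg ha.le hgx) (smul_pos hb hgz)
    _ ≤ g (a • x + b • z) := hg.2 hx hz ha.le hb.le hab

variable {s : Set 𝕜} {g : 𝕜 → 𝕜} {x₀ z p : 𝕜}

theorem ConcaveOn.le_of_nonneg_of_eq_zero (hg : ConcaveOn 𝕜 s g) (hz : z ∈ s)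
    (h0 : g x₀ = 0) (hgz : 0 < g z) (hx₀z : x₀ ≤ z) (hp : p ∈ s) (hgp : 0 ≤ g p) : x₀ ≤ p := by
  by_contra! hpx₀
  have hmem : x₀ ∈ openSegment 𝕜 p z := by
    rw [openSegment_eq_Ioo (hpx₀.trans_le hx₀z)]
    exact ⟨hpx₀, hx₀z.lt_of_ne (by rintro rfl; exact hgz.ne' h0)⟩
  exact (hg.pos_of_mem_openSegment hp hz hgp hgz hmem).ne' h0

theorem ConcaveOn.pos_of_lt_of_eq_zero (hg : ConcaveOn 𝕜 s g) (hx₀ : x₀ ∈ s) (hz : z ∈ s)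
    (h0 : g x₀ = 0) (hgz : 0 < g z) (hpz : p ≤ z) (hx₀p : x₀ < p) : 0 < g p := by
  rcases hpz.lt_or_eq with hpz | rfl
  · refine hg.pos_of_mem_openSegment hx₀ hz h0.ge hgz ?_
    rw [openSegment_eq_Ioo (hx₀p.trans hpz)]
    exact ⟨hx₀p, hpz⟩
  · exact hgz

theorem ConcaveOn.nonneg_iff_le_of_eq_zero (hg : ConcaveOn 𝕜 s g) (hx₀ : x₀ ∈ s) (hz : z ∈ s)
    (h0 : g x₀ = 0) (hgz : 0 < g z) (hx₀z : x₀ ≤ z) (hp : p ∈ s) (hpz : p ≤ z) :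
    0 ≤ g p ↔ x₀ ≤ p := by
  refine ⟨hg.le_of_nonneg_of_eq_zero hz h0 hgz hx₀z hp, fun hx₀p ↦ ?_⟩
  rcases hx₀p.eq_or_lt with rfl | hx₀p
  · exact h0.ge
  · exact (hg.pos_of_lt_of_eq_zero hx₀ hz h0 hgz hpz hx₀p).le

theorem ConcaveOn.eq_of_eq_zero (hg : ConcaveOn 𝕜 s g) (hx₀ : x₀ ∈ s) (hz : z ∈ s)
    (h0 : g x₀ = 0) (hgz : 0 < g z) (hx₀z : x₀ ≤ z) (hp : p ∈ s) (hpz : p ≤ z) (hgp : g p = 0) :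
    p = x₀ :=
  le_antisymm (not_lt.1 fun hx₀p ↦ (hg.pos_of_lt_of_eq_zero hx₀ hz h0 hgz hpz hx₀p).ne' hgp)
    (hg.le_of_nonneg_of_eq_zero hz h0 hgz hx₀z hp hgp.ge)

end Concave

theorem ConcaveOn.exists_mem_Icc_eq_zero {s : Set ℝ} {g : ℝ → ℝ} (hg : ConcaveOn ℝ s g) {a b : ℝ}
    (hab : a ≤ b) (hs : Icc a b ⊆ interior s) (ha : g a ≤ 0) (hb : 0 ≤ g b) :
    ∃ p ∈ Icc a b, g p = 0 :=
  intermediate_value_Icc hab (hg.continuousOn_interior.mono hs) ⟨ha, hb⟩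

theorem ConcaveOn.exists_mem_Ioo_eq_zero_of_sandwich {g : ℝ → ℝ} (hg : ConcaveOn ℝ (Icc 0 1) g)
    {α β : ℝ} (hα : 0 < α) (hαβ : α ≤ β) (hupper : ∀ p ∈ Icc (0 : ℝ) 1, g p ≤ p - α * (1 - p))
    (hlower : ∀ p ∈ Icc (0 : ℝ) 1, p - β * (1 - p) ≤ g p) : ∃ p ∈ Ioo (0 : ℝ) 1, g p = 0 := by
  have ha0 : 0 < α / (1 + α) := by positivity
  have hb1 : β / (1 + β) < 1 := (div_lt_one (by linarith)).2 (by linarith)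
  have hab : α / (1 + α) ≤ β / (1 + β) := by
    rw [div_le_div_iff₀ (by linarith) (by linarith)]; linarith
  have hIcc : Icc (α / (1 + α)) (β / (1 + β)) ⊆ Ioo 0 1 := Icc_subset_Ioo ha0 hb1
  have hα' : α / (1 + α) * (1 + α) = α := div_mul_cancel₀ _ (by linarith)
  have hβ' : β / (1 + β) * (1 + β) = β := div_mul_cancel₀ _ (by linarith)
  obtain ⟨p, hp, hgp⟩ := hg.exists_mem_Icc_eq_zero hab (by rwa [interior_Icc])
    ((hupper _ (Ioo_subset_Icc_self (hIcc (left_mem_Icc.2 hab)))).trans_eq (by linarith))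
    ((hlower _ (Ioo_subset_Icc_self (hIcc (right_mem_Icc.2 hab)))).trans_eq' (by linarith))
  exact ⟨p, hIcc hp, hgp⟩

theorem stmt_13_general (lam c : ℝ) (hc0 : 0 ≤ c) (hclam : c < lam)
    (f : ℝ → ℝ) (hconc : ConcaveOn ℝ (Set.Icc (0 : ℝ) 1) f)
    (hf : ∀ p ∈ Set.Icc (0 : ℝ) 1, 0 ≤ f p ∧ f p ≤ c * (1 - p)) :
    ∃ p0 ∈ Set.Ioo (0 : ℝ) 1,
      lam * (1 - p0) = p0 + f p0 ∧
      (∀ q ∈ Set.Ioo (0 : ℝ) 1, lam * (1 - q) = q + f q → q = p0) ∧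
      (∀ p ∈ Set.Icc (0 : ℝ) 1, (lam * (1 - p) ≤ p + f p ↔ p0 ≤ p)) ∧
      (∀ p ∈ Set.Icc (0 : ℝ) 1,
        (min (lam * (1 - p)) (p + f p) = lam * (1 - p) ↔ p0 ≤ p)) := by
  set g : ℝ → ℝ := fun p ↦ p + f p - lam * (1 - p) with hg_def
  have hg : ConcaveOn ℝ (Icc 0 1) g := by
    refine (hconc.add (((concaveOn_id (convex_Icc 0 1)).smul
      (by linarith : (0 : ℝ) ≤ 1 + lam)).add_const (-lam))).congr fun p _ ↦ ?_
    simp only [hg_def, Pi.add_apply, id, smul_eq_mul]; ring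
  have h1 : (1 : ℝ) ∈ Icc 0 1 := right_mem_Icc.2 zero_le_one
  have hg1 : 0 < g 1 := by
    have hf1 : f 1 = 0 := le_antisymm (by simpa using (hf 1 h1).2) (hf 1 h1).1
    simp [hg_def, hf1]
  obtain ⟨p0, hp0I, hgp0⟩ := hg.exists_mem_Ioo_eq_zero_of_sandwich (sub_pos.2 hclam)
    (sub_le_self _ hc0) (fun p hp ↦ by linarith [(hf p hp).2]) fun p hp ↦ by linarith [(hf p hp).1]
  have hp0 : p0 ∈ Icc (0 : ℝ) 1 := Ioo_subset_Icc_self hp0I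
  have hiff : ∀ p ∈ Icc (0 : ℝ) 1, lam * (1 - p) ≤ p + f p ↔ p0 ≤ p := fun p hp ↦ by
    rw [← sub_nonneg]
    exact hg.nonneg_iff_le_of_eq_zero hp0 h1 hgp0 hg1 hp0I.2.le hp hp.2
  refine ⟨p0, hp0I, by linarith, fun q hq hq0 ↦ ?_, hiff,
    fun p hp ↦ min_eq_left_iff.trans (hiff p hp)⟩
  exact hg.eq_of_eq_zero hp0 h1 hgp0 hg1 hp0I.2.le (Ioo_subset_Icc_self hq) hq.2.le
    (by simp only [hg_def]; linarith)

theorem stmt_13 (lam c : ℝ) (hlam : 0 < lam) (hc0 : 0 ≤ c) (hclam : c < lam)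
    (f : ℝ → ℝ) (hconc : ConcaveOn ℝ (Set.Icc (0 : ℝ) 1) f)
    (hf : ∀ p ∈ Set.Icc (0 : ℝ) 1, 0 ≤ f p ∧ f p ≤ c * (1 - p)) :
    ∃ p0 ∈ Set.Ioo (0 : ℝ) 1,
      lam * (1 - p0) = p0 + f p0 ∧
      (∀ q ∈ Set.Ioo (0 : ℝ) 1, lam * (1 - q) = q + f q → q = p0) ∧
      (∀ p ∈ Set.Icc (0 : ℝ) 1, (lam * (1 - p) ≤ p + f p ↔ p0 ≤ p)) ∧
      (∀ p ∈ Set.Icc (0 : ℝ) 1,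
        (min (lam * (1 - p)) (p + f p) = lam * (1 - p) ↔ p0 ≤ p)) :=
  stmt_13_general lam c hc0 hclam f hconc hf
end
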